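/- arXiv:2508.17140 — 3 statements merged into one kernel-verified Lean document; each statement's English description precedes it below -/
import Mathlib

section
/- Every separable two-qubit state satisfies the imaginarity steering inequality: if ρ is a 4×4 complex matrix of the form ρ = ∑_λ p(λ)·(A_λ ⊗ₖ B_λ), where Λ is a finite index set, p(λ) ≥ 0 with ∑_λ p(λ) = 1, each A_λ and B_λ is a 2×2 density matrix, and ⊗ₖ denotes the Kronecker product, then I₂(ρ) ≤ √2. -/
open Matrix Kronecker
open scoped ComplexOrder

/-- Trace norm of a square complex matrix: `Tr[sqrt(Aᴴ A)]`. -/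
noncomputable def traceNorm {n : Type*} [Fintype n] [DecidableEq n]
    (A : Matrix n n ℂ) : ℝ :=
  (((Matrix.posSemidef_conjTranspose_mul_self A).1.eigenvectorUnitary.1 *
      diagonal (((↑) : ℝ → ℂ) ∘ Real.sqrt ∘ (Matrix.posSemidef_conjTranspose_mul_self A).1.eigenvalues) *
      (star (Matrix.posSemidef_conjTranspose_mul_self A).1.eigenvectorUnitary :
        Matrix n n ℂ)).trace).re

/-- Robustness of imaginarity: `(1/2) ‖ρ - ρᵀ‖₁`. -/
noncomputable def roi {n : Type*} [Fintype n] [DecidableEq n]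
    (ρ : Matrix n n ℂ) : ℝ :=
  (1 / 2) * traceNorm (ρ - ρ.transpose)
def σx : Matrix (Fin 2) (Fin 2) ℂ := !![0, 1; 1, 0]
def σy : Matrix (Fin 2) (Fin 2) ℂ := !![0, -Complex.I; Complex.I, 0]
def σz : Matrix (Fin 2) (Fin 2) ℂ := !![1, 0; 0, -1]
/-- Hadamard matrix (x-basis change). -/
noncomputable def Hm : Matrix (Fin 2) (Fin 2) ℂ :=
  (Real.sqrt 2 : ℂ)⁻¹ • !![1, 1; 1, -1]
/-- Eigenvector matrix of σy (y-basis change). -/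
noncomputable def Vm : Matrix (Fin 2) (Fin 2) ℂ :=
  (Real.sqrt 2 : ℂ)⁻¹ • !![1, 1; Complex.I, -Complex.I]

/-- Robustness of imaginarity in the x-basis. -/
noncomputable def roiX (σ : Matrix (Fin 2) (Fin 2) ℂ) : ℝ := roi (Hm * σ * Hm)
/-- Robustness of imaginarity in the y-basis. -/
noncomputable def roiY (σ : Matrix (Fin 2) (Fin 2) ℂ) : ℝ := roi (Vmᴴ * σ * Vm)
noncomputable def n1 (ρ : Matrix (Fin 2 × Fin 2) (Fin 2 × Fin 2) ℂ) : ℝ :=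
  ((((1 : Matrix (Fin 2) (Fin 2) ℂ) ⊗ₖ σx) * ρ).trace).re
noncomputable def n2 (ρ : Matrix (Fin 2 × Fin 2) (Fin 2 × Fin 2) ℂ) : ℝ :=
  ((((1 : Matrix (Fin 2) (Fin 2) ℂ) ⊗ₖ σy) * ρ).trace).re
noncomputable def t11 (ρ : Matrix (Fin 2 × Fin 2) (Fin 2 × Fin 2) ℂ) : ℝ :=
  (((σx ⊗ₖ σx) * ρ).trace).re
noncomputable def t22 (ρ : Matrix (Fin 2 × Fin 2) (Fin 2 × Fin 2) ℂ) : ℝ :=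
  (((σy ⊗ₖ σy) * ρ).trace).re

/-- The imaginarity steering functional. -/
noncomputable def I2 (ρ : Matrix (Fin 2 × Fin 2) (Fin 2 × Fin 2) ℂ) : ℝ :=
  (1 / 2) * (|n1 ρ - t11 ρ| + |n1 ρ + t11 ρ| + |n2 ρ - t22 ρ| + |n2 ρ + t22 ρ|)


/-!
`n₁, n₂, t₁₁, t₂₂` are real-linear in `ρ`, so `I₂` is convex and it suffices to bound it on
product states `A ⊗ₖ B`. There, with Bloch components `aₖ, bₖ` of `A, B`, one has `nₖ = bₖ` and
`tₖₖ = aₖ bₖ`; since `|aₖ| ≤ 1`, `|bₖ - aₖ bₖ| + |bₖ + aₖ bₖ| = 2 |bₖ|`, so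
`I₂ = |b₁| + |b₂| ≤ √2` because `b₁² + b₂² ≤ 1`. The Bloch-ball bound itself is `det M ≥ 0`:
`|M₀₁|² ≤ M₀₀ M₁₁ ≤ (tr M)² / 4`.
-/

namespace Matrix

theorem trace_σx_mul (M : Matrix (Fin 2) (Fin 2) ℂ) : (σx * M).trace = M 1 0 + M 0 1 := by
  simp [σx, trace, vecMul, dotProduct, Fin.sum_univ_two]

theorem trace_σy_mul (M : Matrix (Fin 2) (Fin 2) ℂ) :
    (σy * M).trace = Complex.I * (M 0 1 - M 1 0) := by
  simp [σy, trace, vecMul, dotProduct, Fin.sum_univ_two, mul_add, sub_eq_neg_add]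

variable {M : Matrix (Fin 2) (Fin 2) ℂ}

theorem IsHermitian.apply_one_zero (hM : M.IsHermitian) : M 1 0 = star (M 0 1) :=
  (hM.apply 1 0).symm

theorem IsHermitian.trace_σx_mul (hM : M.IsHermitian) :
    (σx * M).trace = ((2 * (M 0 1).re : ℝ) : ℂ) := by
  rw [Matrix.trace_σx_mul, hM.apply_one_zero, add_comm]
  simpa using Complex.add_conj (M 0 1)

theorem IsHermitian.trace_σy_mul (hM : M.IsHermitian) :
    (σy * M).trace = ((-2 * (M 0 1).im : ℝ) : ℂ) := by
  rw [Matrix.trace_σy_mul, hM.apply_one_zero, Complex.star_def, Complex.sub_conj]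
  push_cast
  linear_combination (2 * (M 0 1).im : ℂ) * Complex.I_sq

theorem PosSemidef.sq_two_re_add_sq_two_im_le_one (hM : M.PosSemidef) (htr : M.trace = 1) :
    (2 * (M 0 1).re) ^ 2 + (-2 * (M 0 1).im) ^ 2 ≤ 1 := by
  have hdet := hM.det_nonneg
  have h00 := hM.diag_nonneg (i := 0)
  have h11 := hM.diag_nonneg (i := 1)
  rw [det_fin_two, hM.isHermitian.apply_one_zero, Complex.star_def, Complex.mul_conj] at hdet
  rw [trace_fin_two] at htr
  rw [Complex.le_def] at hdet h00 h11
  have hre := congrArg Complex.re htr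
  simp only [Complex.sub_re, Complex.mul_re, Complex.ofReal_re, Complex.add_re,
    Complex.one_re, Complex.zero_re, Complex.zero_im] at hdet h00 h11 hre
  rw [← h00.2, ← h11.2, Complex.normSq_apply] at hdet
  nlinarith [sq_nonneg ((M 0 0).re - (M 1 1).re)]

theorem trace_kronecker_mul_kronecker {R m n : Type*} [CommSemiring R] [Fintype m] [Fintype n]
    (P A : Matrix m m R) (Q B : Matrix n n R) :
    ((P ⊗ₖ Q) * (A ⊗ₖ B)).trace = (P * A).trace * (Q * B).trace := by
  rw [← mul_kronecker_mul, trace_kronecker]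

theorem re_trace_mul_sum_ofReal_smul {ι n : Type*} [Fintype ι] [Fintype n] (O : Matrix n n ℂ)
    (p : ι → ℝ) (ρ : ι → Matrix n n ℂ) :
    (O * ∑ i, (p i : ℂ) • ρ i).trace.re = ∑ i, p i * (O * ρ i).trace.re := by
  simp [Finset.mul_sum, trace_sum, Complex.re_sum, trace_smul]

end Matrix

theorem abs_sum_mul_le_sum_mul_abs {ι : Type*} [Fintype ι] {p : ι → ℝ} (hp : ∀ i, 0 ≤ p i)
    (f : ι → ℝ) : |∑ i, p i * f i| ≤ ∑ i, p i * |f i| :=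
  (Finset.abs_sum_le_sum_abs _ _).trans_eq <| by simp only [abs_mul, abs_of_nonneg (hp _)]

theorem abs_sub_mul_add_abs_add_mul {a : ℝ} (ha : |a| ≤ 1) (b : ℝ) :
    |b - a * b| + |b + a * b| = 2 * |b| := by
  rw [abs_le] at ha
  rw [show b - a * b = b * (1 - a) by ring, show b + a * b = b * (1 + a) by ring, abs_mul,
    abs_mul, abs_of_nonneg (by linarith : (0 : ℝ) ≤ 1 - a),
    abs_of_nonneg (by linarith : (0 : ℝ) ≤ 1 + a)]
  ring

theorem abs_add_abs_le_sqrt_two {x y : ℝ} (h : x ^ 2 + y ^ 2 ≤ 1) : |x| + |y| ≤ √2 :=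
  Real.le_sqrt_of_sq_le <| by nlinarith [sq_nonneg (|x| - |y|), sq_abs x, sq_abs y]

theorem I2_sum_smul_le {ι : Type*} [Fintype ι] {p : ι → ℝ} (hp : ∀ i, 0 ≤ p i)
    (ρ : ι → Matrix (Fin 2 × Fin 2) (Fin 2 × Fin 2) ℂ) :
    I2 (∑ i, (p i : ℂ) • ρ i) ≤ ∑ i, p i * I2 (ρ i) := by
  simp only [I2, n1, n2, t11, t22, re_trace_mul_sum_ofReal_smul, mul_left_comm _ (1 / 2 : ℝ),
    ← Finset.mul_sum]
  gcongr 1 / 2 * ?_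
  simp only [mul_add, Finset.sum_add_distrib]
  gcongr ?_ + ?_ + ?_ + ?_ <;>
    simp only [← Finset.sum_sub_distrib, ← Finset.sum_add_distrib, ← mul_sub, ← mul_add] <;>
    exact abs_sum_mul_le_sum_mul_abs hp _

theorem I2_kronecker_le_sqrt_two {A B : Matrix (Fin 2) (Fin 2) ℂ} (hA : A.PosSemidef)
    (hAtr : A.trace = 1) (hB : B.PosSemidef) (hBtr : B.trace = 1) : I2 (A ⊗ₖ B) ≤ √2 := by
  have hAb := hA.sq_two_re_add_sq_two_im_le_one hAtr
  have hBb := hB.sq_two_re_add_sq_two_im_le_one hBtr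
  simp only [I2, n1, n2, t11, t22, trace_kronecker_mul_kronecker, one_mul, hAtr,
    hA.isHermitian.trace_σx_mul, hA.isHermitian.trace_σy_mul, hB.isHermitian.trace_σx_mul,
    hB.isHermitian.trace_σy_mul, ← Complex.ofReal_mul, Complex.ofReal_re]
  have habs (z : ℂ) (hz : (2 * z.re) ^ 2 + (-2 * z.im) ^ 2 ≤ 1) :
      |2 * z.re| ≤ 1 ∧ |-2 * z.im| ≤ 1 :=
    ⟨(sq_le_one_iff_abs_le_one _).1 (by nlinarith), (sq_le_one_iff_abs_le_one _).1 (by nlinarith)⟩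
  rw [add_assoc, abs_sub_mul_add_abs_add_mul (habs _ hAb).1,
    abs_sub_mul_add_abs_add_mul (habs _ hAb).2]
  linarith [abs_add_abs_le_sqrt_two hBb]

/-- every separable two-qubit state satisfies the imaginarity
steering inequality `I₂(ρ) ≤ √2`. -/
theorem stmt8 {Λ : Type*} [Fintype Λ] (p : Λ → ℝ)
    (A B : Λ → Matrix (Fin 2) (Fin 2) ℂ)
    (hp : ∀ l, 0 ≤ p l) (hpsum : ∑ l, p l = 1)
    (hA : ∀ l, (A l).PosSemidef) (hAtr : ∀ l, (A l).trace = 1)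
    (hB : ∀ l, (B l).PosSemidef) (hBtr : ∀ l, (B l).trace = 1)
    (ρ : Matrix (Fin 2 × Fin 2) (Fin 2 × Fin 2) ℂ)
    (hρ : ρ = ∑ l, ((p l : ℂ)) • (A l ⊗ₖ B l)) :
    I2 ρ ≤ Real.sqrt 2 := by
  subst hρ
  calc I2 (∑ l, (p l : ℂ) • (A l ⊗ₖ B l)) ≤ ∑ l, p l * I2 (A l ⊗ₖ B l) := I2_sum_smul_le hp _
    _ ≤ ∑ l, p l * √2 := by
      gcongr with l
      · exact hp l
      · exact I2_kronecker_le_sqrt_two (hA l) (hAtr l) (hB l) (hBtr l)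
    _ = √2 := by rw [← Finset.sum_mul, hpsum, one_mul]
end

section
/- For any two-qubit density matrix ρ (a 4×4 positive semidefinite matrix of trace 1, indexed by Fin 2 × Fin 2), the imaginarity steering functional computed from the steering protocol equals the four-parameter formula: define Π₊ˣ = (1+σx)/2, Π₋ˣ = (1−σx)/2, Π₊ʸ = (1+σy)/2, Π₋ʸ = (1−σy)/2, and the unnormalized conditional states of the second qubit σ_{a|x} = Tr_A[(Π_aˣ ⊗ₖ 1)·ρ] and σ_{a|y} = Tr_A[(Π_aʸ ⊗ₖ 1)·ρ] for a ∈ {+,−}, where the partial trace over the first factor is (Tr_A M)_{jk} = ∑_i M_{(i,j),(i,k)}. Then 𝓘ʸ(σ_{+|x}) + 𝓘ʸ(σ_{−|x}) + 𝓘ˣ(σ_{+|y}) + 𝓘ˣ(σ_{−|y}) = (1/2)·(|n₁ − t₁₁| + |n₁ + t₁₁| + |n₂ − t₂₂| + |n₂ + t₂₂|), where n₁ = Re Tr[(1 ⊗ₖ σx)·ρ], n₂ = Re Tr[(1 ⊗ₖ σy)·ρ], t₁₁ = Re Tr[(σx ⊗ₖ σx)·ρ], t₂₂ = Re Tr[(σy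 ⊗ₖ σy)·ρ]. -/
open Matrix Kronecker
open scoped ComplexOrder

/-- Partial trace over the first qubit. -/
noncomputable def ptrA (M : Matrix (Fin 2 × Fin 2) (Fin 2 × Fin 2) ℂ) :
    Matrix (Fin 2) (Fin 2) ℂ :=
  Matrix.of fun j k => ∑ i : Fin 2, M (i, j) (i, k)

/-! For a 2 × 2 matrix `M`, `M - Mᵀ` is `c • !![0, 1; -1, 0]` with `c = M 0 1 - M 1 0`, whose
trace norm is `2‖c‖`; so `𝓘(M) = ‖c‖`, and after the basis changes `𝓘ʸ(σ) = ‖Tr (σ σx)‖` and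
`𝓘ˣ(σ) = ‖Tr (σ σy)‖`. Pairing a conditional state with `B` gives
`Tr (Tr_A[(Π ⊗ 1) ρ] B) = Tr ((Π ⊗ B) ρ)`, and for `Π = (1 ± A)/2` this is
`(Tr ((1 ⊗ B) ρ) ± Tr ((A ⊗ B) ρ)) / 2`, a real number because `ρ`, `A`, `B` are Hermitian. -/

namespace Matrix

lemma sub_kronecker {l m n p α : Type*} [NonUnitalNonAssocRing α] (A₁ A₂ : Matrix l m α)
    (B : Matrix n p α) : (A₁ - A₂) ⊗ₖ B = A₁ ⊗ₖ B - A₂ ⊗ₖ B := by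
  ext
  simp [sub_mul]

lemma IsHermitian.kronecker {l m R : Type*} [CommSemiring R] [StarRing R]
    {A : Matrix l l R} {B : Matrix m m R} (hA : A.IsHermitian) (hB : B.IsHermitian) :
    (A ⊗ₖ B).IsHermitian := by
  rw [IsHermitian, conjTranspose_kronecker, hA, hB]

lemma IsHermitian.ofReal_re_trace_mul {n : Type*} [Fintype n] {A B : Matrix n n ℂ}
    (hA : A.IsHermitian) (hB : B.IsHermitian) :
    (((A * B).trace.re : ℝ) : ℂ) = (A * B).trace := by
  rw [← Complex.conj_eq_iff_re]
  change star _ = _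
  rw [← trace_conjTranspose, conjTranspose_mul, hA, hB, trace_mul_comm]

end Matrix

lemma traceNorm_eq_sum_sqrt_eigenvalues {n : Type*} [Fintype n] [DecidableEq n]
    (A : Matrix n n ℂ) :
    traceNorm A = ∑ i, √((posSemidef_conjTranspose_mul_self A).1.eigenvalues i) := by
  rw [traceNorm, trace_mul_cycle, Unitary.coe_star_mul_self, one_mul, trace_diagonal,
    Complex.re_sum]
  rfl

lemma traceNorm_of_conjTranspose_mul_self_eq_smul_one {n : Type*} [Fintype n] [DecidableEq n]
    (A : Matrix n n ℂ) (c : ℝ) (h : Aᴴ * A = (c : ℂ) • 1) :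
    traceNorm A = Fintype.card n * √c := by
  cases isEmpty_or_nonempty n
  · simp [traceNorm_eq_sum_sqrt_eigenvalues]
  have hspec : spectrum ℝ (Aᴴ * A) = {c} := by
    rw [h, Complex.coe_smul, ← Algebra.algebraMap_eq_smul_one]
    exact spectrum.scalar_eq c
  have hev (i : n) : (posSemidef_conjTranspose_mul_self A).1.eigenvalues i = c := by
    simpa [hspec] using (posSemidef_conjTranspose_mul_self A).1.eigenvalues_mem_spectrum_real i
  simp [traceNorm_eq_sum_sqrt_eigenvalues, hev]

lemma roi_eq_norm (M : Matrix (Fin 2) (Fin 2) ℂ) : roi M = ‖M 0 1 - M 1 0‖ := by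
  have h : (M - Mᵀ)ᴴ * (M - Mᵀ) = ((‖M 0 1 - M 1 0‖ ^ 2 : ℝ) : ℂ) • 1 := by
    ext i j
    fin_cases i <;> fin_cases j <;>
      simp [mul_apply, Fin.sum_univ_two, ← map_sub, Complex.conj_mul', norm_sub_rev (M 1 0)]
  rw [roi, traceNorm_of_conjTranspose_mul_self_eq_smul_one _ _ h, Real.sqrt_sq (norm_nonneg _),
    Fintype.card_fin]
  push_cast
  ring

lemma inv_sqrt_two_sq : ((√2 : ℝ) : ℂ)⁻¹ ^ 2 = 2⁻¹ := by
  rw [inv_pow, ← Complex.ofReal_pow, Real.sq_sqrt zero_le_two]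
  norm_num

lemma roiY_eq_norm_trace_mul_σx (σ : Matrix (Fin 2) (Fin 2) ℂ) :
    roiY σ = ‖(σ * σx).trace‖ := by
  have h : (Vmᴴ * σ * Vm) 0 1 - (Vmᴴ * σ * Vm) 1 0 = -Complex.I * (σ * σx).trace := by
    simp only [Vm, smul_of, smul_cons, smul_eq_mul, mul_one, smul_empty, mul_neg, Fin.isValue,
      mul_apply, conjTranspose_apply, of_apply, cons_val', cons_val_zero, cons_val_fin_one,
      RCLike.star_def, Fin.sum_univ_two, map_inv₀, Complex.conj_ofReal, cons_val_one, map_mul,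
      Complex.conj_I, neg_mul, map_neg, neg_neg, trace, σx, diag_apply, mul_zero, zero_add,
      add_zero]
    ring_nf
    rw [inv_sqrt_two_sq]
    ring
  rw [roiY, roi_eq_norm, h, norm_mul, norm_neg, Complex.norm_I, one_mul]

lemma roiX_eq_norm_trace_mul_σy (σ : Matrix (Fin 2) (Fin 2) ℂ) :
    roiX σ = ‖(σ * σy).trace‖ := by
  have h : (Hm * σ * Hm) 0 1 - (Hm * σ * Hm) 1 0 = Complex.I * (σ * σy).trace := by
    simp only [Hm, smul_of, smul_cons, smul_eq_mul, mul_one, smul_empty, mul_neg, cons_mul,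
      Nat.succ_eq_add_one, Nat.reduceAdd, empty_mul, Equiv.symm_apply_apply, Fin.isValue,
      mul_apply, of_apply, cons_val', vecMul, dotProduct, Fin.sum_univ_two, cons_val_zero,
      cons_val_one, cons_val_fin_one, neg_mul, trace, σy, diag_apply, mul_zero, zero_add, add_zero]
    ring_nf
    rw [inv_sqrt_two_sq, Complex.I_sq]
    ring
  rw [roiX, roi_eq_norm, h, norm_mul, Complex.norm_I, one_mul]

lemma trace_ptrA_mul (M : Matrix (Fin 2 × Fin 2) (Fin 2 × Fin 2) ℂ)
    (B : Matrix (Fin 2) (Fin 2) ℂ) :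
    (ptrA M * B).trace = (M * (1 ⊗ₖ B)).trace := by
  simp only [trace, ptrA, diag_apply, mul_apply, of_apply, kroneckerMap_apply, one_apply,
    Fintype.sum_prod_type, Fin.sum_univ_two, Fin.isValue, if_true, if_false, zero_ne_one,
    one_ne_zero]
  ring

lemma trace_ptrA_kronecker_one_mul_mul (P B : Matrix (Fin 2) (Fin 2) ℂ)
    (ρ : Matrix (Fin 2 × Fin 2) (Fin 2 × Fin 2) ℂ) :
    (ptrA ((P ⊗ₖ 1) * ρ) * B).trace = ((P ⊗ₖ B) * ρ).trace := by
  rw [trace_ptrA_mul, trace_mul_comm, ← mul_assoc, ← mul_kronecker_mul, one_mul, mul_one]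

lemma isHermitian_σx : σx.IsHermitian := by
  ext i j; fin_cases i <;> fin_cases j <;> simp [σx]

lemma isHermitian_σy : σy.IsHermitian := by
  ext i j; fin_cases i <;> fin_cases j <;> simp [σy]

section ConditionalStates

variable {ρ : Matrix (Fin 2 × Fin 2) (Fin 2 × Fin 2) ℂ} {A B : Matrix (Fin 2) (Fin 2) ℂ}

lemma norm_trace_ptrA_add_mul (hρ : ρ.IsHermitian) (hA : A.IsHermitian) (hB : B.IsHermitian) :
    ‖(ptrA ((((2 : ℂ)⁻¹ • (1 + A)) ⊗ₖ 1) * ρ) * B).trace‖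
      = |((1 ⊗ₖ B) * ρ).trace.re + ((A ⊗ₖ B) * ρ).trace.re| / 2 := by
  rw [trace_ptrA_kronecker_one_mul_mul, smul_kronecker, add_kronecker, smul_mul, add_mul,
    trace_smul, trace_add, ← (isHermitian_one.kronecker hB).ofReal_re_trace_mul hρ,
    ← (hA.kronecker hB).ofReal_re_trace_mul hρ, ← Complex.ofReal_add, smul_eq_mul, norm_mul,
    Complex.norm_real, Real.norm_eq_abs]
  norm_num
  ring

lemma norm_trace_ptrA_sub_mul (hρ : ρ.IsHermitian) (hA : A.IsHermitian) (hB : B.IsHermitian) :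
    ‖(ptrA ((((2 : ℂ)⁻¹ • (1 - A)) ⊗ₖ 1) * ρ) * B).trace‖
      = |((1 ⊗ₖ B) * ρ).trace.re - ((A ⊗ₖ B) * ρ).trace.re| / 2 := by
  rw [trace_ptrA_kronecker_one_mul_mul, smul_kronecker, sub_kronecker, smul_mul, sub_mul,
    trace_smul, trace_sub, ← (isHermitian_one.kronecker hB).ofReal_re_trace_mul hρ,
    ← (hA.kronecker hB).ofReal_re_trace_mul hρ, ← Complex.ofReal_sub, smul_eq_mul, norm_mul,
    Complex.norm_real, Real.norm_eq_abs]
  norm_num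
  ring

end ConditionalStates

theorem stmt9_general (ρ : Matrix (Fin 2 × Fin 2) (Fin 2 × Fin 2) ℂ)
    (hρ : ρ.PosSemidef) :
    roiY (ptrA (((((2 : ℂ)⁻¹ • ((1 : Matrix (Fin 2) (Fin 2) ℂ) + σx)) ⊗ₖ
        (1 : Matrix (Fin 2) (Fin 2) ℂ)) * ρ)))
      + roiY (ptrA (((((2 : ℂ)⁻¹ • ((1 : Matrix (Fin 2) (Fin 2) ℂ) - σx)) ⊗ₖ
        (1 : Matrix (Fin 2) (Fin 2) ℂ)) * ρ)))
      + roiX (ptrA (((((2 : ℂ)⁻¹ • ((1 : Matrix (Fin 2) (Fin 2) ℂ) + σy)) ⊗ₖ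
        (1 : Matrix (Fin 2) (Fin 2) ℂ)) * ρ)))
      + roiX (ptrA (((((2 : ℂ)⁻¹ • ((1 : Matrix (Fin 2) (Fin 2) ℂ) - σy)) ⊗ₖ
        (1 : Matrix (Fin 2) (Fin 2) ℂ)) * ρ)))
      = (1 / 2) * (|n1 ρ - t11 ρ| + |n1 ρ + t11 ρ|
          + |n2 ρ - t22 ρ| + |n2 ρ + t22 ρ|) := by
  rw [roiY_eq_norm_trace_mul_σx, roiY_eq_norm_trace_mul_σx, roiX_eq_norm_trace_mul_σy,
    roiX_eq_norm_trace_mul_σy, norm_trace_ptrA_add_mul hρ.1 isHermitian_σx isHermitian_σx,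
    norm_trace_ptrA_sub_mul hρ.1 isHermitian_σx isHermitian_σx,
    norm_trace_ptrA_add_mul hρ.1 isHermitian_σy isHermitian_σy,
    norm_trace_ptrA_sub_mul hρ.1 isHermitian_σy isHermitian_σy]
  simp only [n1, n2, t11, t22]
  ring

/-- the imaginarity steering functional computed from the steering
protocol (conditional states of Bob given Alice's x/y measurements) equals the
four-parameter formula `I₂(ρ)`. -/
theorem stmt9 (ρ : Matrix (Fin 2 × Fin 2) (Fin 2 × Fin 2) ℂ)
    (hρ : ρ.PosSemidef) (hTr : ρ.trace = 1) :
    roiY (ptrA (((((2 : ℂ)⁻¹ • ((1 : Matrix (Fin 2) (Fin 2) ℂ) + σx)) ⊗ₖ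
        (1 : Matrix (Fin 2) (Fin 2) ℂ)) * ρ)))
      + roiY (ptrA (((((2 : ℂ)⁻¹ • ((1 : Matrix (Fin 2) (Fin 2) ℂ) - σx)) ⊗ₖ
        (1 : Matrix (Fin 2) (Fin 2) ℂ)) * ρ)))
      + roiX (ptrA (((((2 : ℂ)⁻¹ • ((1 : Matrix (Fin 2) (Fin 2) ℂ) + σy)) ⊗ₖ
        (1 : Matrix (Fin 2) (Fin 2) ℂ)) * ρ)))
      + roiX (ptrA (((((2 : ℂ)⁻¹ • ((1 : Matrix (Fin 2) (Fin 2) ℂ) - σy)) ⊗ₖ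
        (1 : Matrix (Fin 2) (Fin 2) ℂ)) * ρ)))
      = (1 / 2) * (|n1 ρ - t11 ρ| + |n1 ρ + t11 ρ|
          + |n2 ρ - t22 ρ| + |n2 ρ + t22 ρ|) :=
  stmt9_general ρ hρ
end

section
/- Monogamy of imaginarity steering: let η₀, η₁, η₂, η₃, η₄ ∈ [0,1] with η₀² + η₁² + η₂² + η₃² + η₄² = 1 and θ ∈ ℝ, and let ψ ∈ ℂ⁸ (indexed by Fin 2 × Fin 2 × Fin 2) be the tripartite pure state ψ = η₀·e_{000} + η₁·e^{iθ}·e_{100} + η₂·e_{101} + η₃·e_{110} + η₄·e_{111}. Define the reduced two-qubit density matrices ρ_AB and ρ_AC by (ρ_AB)_{(i,j),(i′,j′)} = ∑_k ψ_{(i,j,k)}·conj(ψ_{(i′,j′,k)}) and (ρ_AC)_{(i,k),(i′,k′)} = ∑_j ψ_{(i,j,k)}·conj(ψ_{(i′,j,k′)}). Then the imaginarity steering functionals of the two bipartite cuts satisfy the monogamy relation I₂(ρ_AB) + I₂(ρ_AC) ≤ 2√2. -/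
/-! Cauchy–Schwarz on the four numbers `n₁ ∓ t₁₁, n₂ ∓ t₂₂` gives `I₂(ρ) ≤ √(2 W(ρ))` with
`W = n₁² + t₁₁² + n₂² + t₂₂²`, and once more `I₂(ρ_AB) + I₂(ρ_AC) ≤ √(4 (W_AB + W_AC))`.
For the given state `W_AB + W_AC = 4 ((η₁² + η₄²)(η₂² + η₃²) + 4 η₁η₂η₃η₄ cos θ + 2 η₀² u)`
with `u = η₂² + η₃²`; AM–GM bounds the cross term by `(η₁² + η₄²) u`, leaving
`8 u (1 - u) ≤ 2`. -/

open Matrix Kronecker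
open scoped ComplexOrder

lemma abs_add_abs_add_abs_add_abs_le_two_mul_sqrt (a b c d : ℝ) :
    |a| + |b| + |c| + |d| ≤ 2 * √(a ^ 2 + b ^ 2 + c ^ 2 + d ^ 2) :=
  calc |a| + |b| + |c| + |d| ≤ √(2 ^ 2 * (a ^ 2 + b ^ 2 + c ^ 2 + d ^ 2)) :=
        Real.le_sqrt_of_sq_le <| by
          nlinarith [sq_abs a, sq_abs b, sq_abs c, sq_abs d, sq_nonneg (|a| - |b|),
            sq_nonneg (|a| - |c|), sq_nonneg (|a| - |d|), sq_nonneg (|b| - |c|),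
            sq_nonneg (|b| - |d|), sq_nonneg (|c| - |d|)]
    _ = 2 * √(a ^ 2 + b ^ 2 + c ^ 2 + d ^ 2) := by
        rw [Real.sqrt_mul' _ (by positivity), Real.sqrt_sq zero_le_two]

lemma sqrt_add_sqrt_le_sqrt_two_mul_add {x y : ℝ} (hx : 0 ≤ x) (hy : 0 ≤ y) :
    √x + √y ≤ √(2 * (x + y)) := by
  refine Real.le_sqrt_of_sq_le ?_
  nlinarith [Real.sq_sqrt hx, Real.sq_sqrt hy, sq_nonneg (√x - √y)]

noncomputable def steeringWeight (ρ : Matrix (Fin 2 × Fin 2) (Fin 2 × Fin 2) ℂ) : ℝ :=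
  n1 ρ ^ 2 + t11 ρ ^ 2 + n2 ρ ^ 2 + t22 ρ ^ 2

lemma steeringWeight_nonneg (ρ : Matrix (Fin 2 × Fin 2) (Fin 2 × Fin 2) ℂ) :
    0 ≤ steeringWeight ρ := by
  unfold steeringWeight; positivity

lemma I2_le_sqrt_steeringWeight (ρ : Matrix (Fin 2 × Fin 2) (Fin 2 × Fin 2) ℂ) :
    I2 ρ ≤ √(2 * steeringWeight ρ) := by
  have h := abs_add_abs_add_abs_add_abs_le_two_mul_sqrt (n1 ρ - t11 ρ) (n1 ρ + t11 ρ)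
    (n2 ρ - t22 ρ) (n2 ρ + t22 ρ)
  have hsum : (n1 ρ - t11 ρ) ^ 2 + (n1 ρ + t11 ρ) ^ 2 + (n2 ρ - t22 ρ) ^ 2 +
      (n2 ρ + t22 ρ) ^ 2 = 2 * steeringWeight ρ := by
    rw [steeringWeight]; ring
  rw [hsum] at h
  rw [I2]; linarith

lemma I2_add_I2_le_of_steeringWeight_add_le (ρ σ : Matrix (Fin 2 × Fin 2) (Fin 2 × Fin 2) ℂ)
    (h : steeringWeight ρ + steeringWeight σ ≤ 2) : I2 ρ + I2 σ ≤ 2 * √2 :=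
  calc I2 ρ + I2 σ ≤ √(2 * steeringWeight ρ) + √(2 * steeringWeight σ) :=
        add_le_add (I2_le_sqrt_steeringWeight ρ) (I2_le_sqrt_steeringWeight σ)
    _ ≤ √(2 * (2 * steeringWeight ρ + 2 * steeringWeight σ)) :=
        sqrt_add_sqrt_le_sqrt_two_mul_add (mul_nonneg zero_le_two (steeringWeight_nonneg ρ))
          (mul_nonneg zero_le_two (steeringWeight_nonneg σ))
    _ ≤ √(2 ^ 2 * 2) := Real.sqrt_le_sqrt (by linarith)
    _ = 2 * √2 := by rw [Real.sqrt_mul' _ zero_le_two, Real.sqrt_sq zero_le_two]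

noncomputable def tripartiteState (η₀ η₁ η₂ η₃ η₄ θ : ℝ) : Fin 2 × Fin 2 × Fin 2 → ℂ := fun p =>
  if p = ((0 : Fin 2), (0 : Fin 2), (0 : Fin 2)) then (η₀ : ℂ)
  else if p = ((1 : Fin 2), (0 : Fin 2), (0 : Fin 2)) then
    (η₁ : ℂ) * Complex.exp (θ * Complex.I)
  else if p = ((1 : Fin 2), (0 : Fin 2), (1 : Fin 2)) then (η₂ : ℂ)
  else if p = ((1 : Fin 2), (1 : Fin 2), (0 : Fin 2)) then (η₃ : ℂ)
  else if p = ((1 : Fin 2), (1 : Fin 2), (1 : Fin 2)) then (η₄ : ℂ)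
  else 0

def traceOutThird (ψ : Fin 2 × Fin 2 × Fin 2 → ℂ) : Matrix (Fin 2 × Fin 2) (Fin 2 × Fin 2) ℂ :=
  Matrix.of fun p q => ∑ k : Fin 2, ψ (p.1, p.2, k) * (starRingEnd ℂ) (ψ (q.1, q.2, k))

def traceOutSecond (ψ : Fin 2 × Fin 2 × Fin 2 → ℂ) : Matrix (Fin 2 × Fin 2) (Fin 2 × Fin 2) ℂ :=
  Matrix.of fun p q => ∑ j : Fin 2, ψ (p.1, j, p.2) * (starRingEnd ℂ) (ψ (q.1, j, q.2))

lemma steeringWeight_traceOutThird (η₀ η₁ η₂ η₃ η₄ θ : ℝ) :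
    steeringWeight (traceOutThird (tripartiteState η₀ η₁ η₂ η₃ η₄ θ)) =
      4 * ((η₁ * η₃ * Real.cos θ + η₂ * η₄) ^ 2 + (η₁ * η₃ * Real.sin θ) ^ 2 +
        2 * (η₀ * η₃) ^ 2) := by
  simp only [steeringWeight, n1, trace, σx, traceOutThird, tripartiteState, Fin.isValue,
    Prod.mk.injEq, ite_mul, zero_mul, Fin.sum_univ_two, and_true, zero_ne_one, and_false,
    ↓reduceIte, one_ne_zero, diag_apply, Matrix.mul_apply, kroneckerMap_apply, Matrix.one_apply,
    of_apply, cons_val', cons_val_fin_one, one_mul, Fintype.sum_prod_type, Finset.sum_ite_irrel,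
    cons_val_zero, cons_val_one, Finset.sum_const_zero, Finset.sum_ite_eq, Finset.mem_univ,
    zero_add, add_zero, map_zero, mul_zero, map_mul, Complex.conj_ofReal, Complex.add_re,
    Complex.mul_re, Complex.ofReal_re, Complex.conj_re, Complex.exp_re, Complex.I_re,
    Complex.ofReal_im, Complex.I_im, mul_one, sub_self, Real.exp_zero, Complex.mul_im,
    Complex.conj_im, Complex.exp_im, mul_neg, neg_zero, sub_zero, t11, n2, σy, neg_mul,
    Complex.neg_re, Complex.add_im, sub_neg_eq_add, zero_sub, t22, Complex.I_mul_I, neg_neg]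
  ring

lemma steeringWeight_traceOutSecond (η₀ η₁ η₂ η₃ η₄ θ : ℝ) :
    steeringWeight (traceOutSecond (tripartiteState η₀ η₁ η₂ η₃ η₄ θ)) =
      4 * ((η₁ * η₂ * Real.cos θ + η₃ * η₄) ^ 2 + (η₁ * η₂ * Real.sin θ) ^ 2 +
        2 * (η₀ * η₂) ^ 2) := by
  simp only [steeringWeight, n1, trace, σx, traceOutSecond, tripartiteState, Fin.isValue,
    Prod.mk.injEq, ite_mul, zero_mul, Fin.sum_univ_two, true_and, zero_ne_one, false_and,
    and_false, ↓reduceIte, one_ne_zero, diag_apply, Matrix.mul_apply, kroneckerMap_apply,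
    Matrix.one_apply, of_apply, cons_val', cons_val_fin_one, one_mul, Fintype.sum_prod_type,
    Finset.sum_ite_irrel, cons_val_zero, and_true, cons_val_one, Finset.sum_const_zero,
    Finset.sum_ite_eq, Finset.mem_univ, zero_add, add_zero, map_zero, mul_zero, map_mul,
    Complex.conj_ofReal, Complex.add_re, Complex.mul_re, Complex.ofReal_re, Complex.conj_re,
    Complex.exp_re, Complex.I_re, Complex.ofReal_im, Complex.I_im, mul_one, sub_self,
    Real.exp_zero, Complex.mul_im, Complex.conj_im, Complex.exp_im, mul_neg, neg_zero, sub_zero,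
    t11, n2, σy, neg_mul, Complex.neg_re, Complex.add_im, sub_neg_eq_add, zero_sub, t22,
    Complex.I_mul_I, neg_neg]
  ring

lemma steeringWeight_traceOutThird_add_traceOutSecond_le {η₀ η₁ η₂ η₃ η₄ : ℝ} (θ : ℝ)
    (hnorm : η₀ ^ 2 + η₁ ^ 2 + η₂ ^ 2 + η₃ ^ 2 + η₄ ^ 2 = 1) :
    steeringWeight (traceOutThird (tripartiteState η₀ η₁ η₂ η₃ η₄ θ)) +
      steeringWeight (traceOutSecond (tripartiteState η₀ η₁ η₂ η₃ η₄ θ)) ≤ 2 := by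
  rw [steeringWeight_traceOutThird, steeringWeight_traceOutSecond]
  set P := η₁ * η₂ * η₃ * η₄
  have hexpand : (η₁ * η₃ * Real.cos θ + η₂ * η₄) ^ 2 + (η₁ * η₃ * Real.sin θ) ^ 2 +
      2 * (η₀ * η₃) ^ 2 + ((η₁ * η₂ * Real.cos θ + η₃ * η₄) ^ 2 + (η₁ * η₂ * Real.sin θ) ^ 2 +
      2 * (η₀ * η₂) ^ 2) =
      (η₁ ^ 2 + η₄ ^ 2) * (η₂ ^ 2 + η₃ ^ 2) + 4 * P * Real.cos θ +
        2 * η₀ ^ 2 * (η₂ ^ 2 + η₃ ^ 2) := by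
    linear_combination ((η₁ * η₃) ^ 2 + (η₁ * η₂) ^ 2) * Real.sin_sq_add_cos_sq θ
  have hcross : 4 * P * Real.cos θ ≤ (η₁ ^ 2 + η₄ ^ 2) * (η₂ ^ 2 + η₃ ^ 2) := by
    have hminus : 4 * P ≤ (η₁ ^ 2 + η₄ ^ 2) * (η₂ ^ 2 + η₃ ^ 2) := by
      nlinarith [sq_nonneg (η₁ * η₂ - η₃ * η₄), sq_nonneg (η₁ * η₃ - η₂ * η₄)]
    have hplus : -(4 * P) ≤ (η₁ ^ 2 + η₄ ^ 2) * (η₂ ^ 2 + η₃ ^ 2) := by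
      nlinarith [sq_nonneg (η₁ * η₂ + η₃ * η₄), sq_nonneg (η₁ * η₃ + η₂ * η₄)]
    nlinarith [Real.cos_le_one θ, Real.neg_one_le_cos θ]
  have hamgm : 4 * ((η₂ ^ 2 + η₃ ^ 2) * (η₀ ^ 2 + η₁ ^ 2 + η₄ ^ 2)) ≤ 1 := by
    nlinarith [sq_nonneg (η₂ ^ 2 + η₃ ^ 2 - (η₀ ^ 2 + η₁ ^ 2 + η₄ ^ 2))]
  linarith

theorem stmt19_general (η₀ η₁ η₂ η₃ η₄ θ : ℝ)
    (hnorm : η₀ ^ 2 + η₁ ^ 2 + η₂ ^ 2 + η₃ ^ 2 + η₄ ^ 2 = 1)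
    (ψ : Fin 2 × Fin 2 × Fin 2 → ℂ)
    (hψ : ψ = fun p =>
      if p = ((0 : Fin 2), (0 : Fin 2), (0 : Fin 2)) then (η₀ : ℂ)
      else if p = ((1 : Fin 2), (0 : Fin 2), (0 : Fin 2)) then
        (η₁ : ℂ) * Complex.exp (θ * Complex.I)
      else if p = ((1 : Fin 2), (0 : Fin 2), (1 : Fin 2)) then (η₂ : ℂ)
      else if p = ((1 : Fin 2), (1 : Fin 2), (0 : Fin 2)) then (η₃ : ℂ)
      else if p = ((1 : Fin 2), (1 : Fin 2), (1 : Fin 2)) then (η₄ : ℂ)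
      else 0)
    (ρAB ρAC : Matrix (Fin 2 × Fin 2) (Fin 2 × Fin 2) ℂ)
    (hAB : ρAB = Matrix.of fun p q =>
      ∑ k : Fin 2, ψ (p.1, p.2, k) * (starRingEnd ℂ) (ψ (q.1, q.2, k)))
    (hAC : ρAC = Matrix.of fun p q =>
      ∑ j : Fin 2, ψ (p.1, j, p.2) * (starRingEnd ℂ) (ψ (q.1, j, q.2))) :
    I2 ρAB + I2 ρAC ≤ 2 * Real.sqrt 2 := by
  change ψ = tripartiteState η₀ η₁ η₂ η₃ η₄ θ at hψ
  change ρAB = traceOutThird ψ at hAB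
  change ρAC = traceOutSecond ψ at hAC
  subst hψ hAB hAC
  exact I2_add_I2_le_of_steeringWeight_add_le _ _
    (steeringWeight_traceOutThird_add_traceOutSecond_le θ hnorm)

/-- monogamy of imaginarity steering. For the general tripartite
pure state `ψ = η₀ e₀₀₀ + η₁ e^{iθ} e₁₀₀ + η₂ e₁₀₁ + η₃ e₁₁₀ + η₄ e₁₁₁`, the two
reduced bipartite states satisfy `I₂(ρ_AB) + I₂(ρ_AC) ≤ 2√2`. -/
theorem stmt19 (η₀ η₁ η₂ η₃ η₄ θ : ℝ)
    (h0 : 0 ≤ η₀) (h0' : η₀ ≤ 1) (h1 : 0 ≤ η₁) (h1' : η₁ ≤ 1)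
    (h2 : 0 ≤ η₂) (h2' : η₂ ≤ 1) (h3 : 0 ≤ η₃) (h3' : η₃ ≤ 1)
    (h4 : 0 ≤ η₄) (h4' : η₄ ≤ 1)
    (hnorm : η₀ ^ 2 + η₁ ^ 2 + η₂ ^ 2 + η₃ ^ 2 + η₄ ^ 2 = 1)
    (ψ : Fin 2 × Fin 2 × Fin 2 → ℂ)
    (hψ : ψ = fun p =>
      if p = ((0 : Fin 2), (0 : Fin 2), (0 : Fin 2)) then (η₀ : ℂ)
      else if p = ((1 : Fin 2), (0 : Fin 2), (0 : Fin 2)) then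
        (η₁ : ℂ) * Complex.exp (θ * Complex.I)
      else if p = ((1 : Fin 2), (0 : Fin 2), (1 : Fin 2)) then (η₂ : ℂ)
      else if p = ((1 : Fin 2), (1 : Fin 2), (0 : Fin 2)) then (η₃ : ℂ)
      else if p = ((1 : Fin 2), (1 : Fin 2), (1 : Fin 2)) then (η₄ : ℂ)
      else 0)
    (ρAB ρAC : Matrix (Fin 2 × Fin 2) (Fin 2 × Fin 2) ℂ)
    (hAB : ρAB = Matrix.of fun p q =>
      ∑ k : Fin 2, ψ (p.1, p.2, k) * (starRingEnd ℂ) (ψ (q.1, q.2, k)))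
    (hAC : ρAC = Matrix.of fun p q =>
      ∑ j : Fin 2, ψ (p.1, j, p.2) * (starRingEnd ℂ) (ψ (q.1, j, q.2))) :
    I2 ρAB + I2 ρAC ≤ 2 * Real.sqrt 2 :=
  stmt19_general η₀ η₁ η₂ η₃ η₄ θ hnorm ψ hψ ρAB ρAC hAB hAC
end
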